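/- arXiv:1512.09303 — 2 statements merged into one kernel-verified Lean document; each statement's English description precedes it below -/
import Mathlib

section
/- Let X be a nonempty compact Hausdorff space and E a commutative Banach algebra with unit. If E is a Ditkin algebra, then C(X,E) is a Ditkin algebra. -/
open WeakDual

/-- For a commutative Banach algebra `A` (over `ℂ`) and a character `φ`, `Jset A φ` is the ideal
`J_φ` of elements whose Gelfand transform vanishes on a neighbourhood of `φ` in the character
space `M(A)` (with the weak-star topology). -/
def Jset (A : Type*) [NormedCommRing A] [NormedAlgebra ℂ A]
    (φ : characterSpace ℂ A) : Set A :=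
  {a : A | ∀ᶠ χ in nhds φ, χ a = 0}

/-- `A` is a Ditkin algebra: for every character `φ` and every `a` with `â(φ) = 0`
(i.e. `a ∈ I_φ`), `a` lies in the closure of `a • J_φ`. -/
def IsDitkinAlgebra (A : Type*) [NormedCommRing A] [NormedAlgebra ℂ A] : Prop :=
  ∀ (φ : characterSpace ℂ A) (a : A), φ a = 0 → a ∈ closure ((a * ·) '' Jset A φ)

/-- `A` has bounded relative units: for every character `φ` there is `m > 0` such that for
every compact `K ⊆ M(A) \ {φ}` there is `a ∈ J_φ` with `â = 1` on `K` and `‖a‖ ≤ m`. -/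
def HasBoundedRelativeUnits (A : Type*) [NormedCommRing A] [NormedAlgebra ℂ A] : Prop :=
  ∀ φ : characterSpace ℂ A, ∃ m : ℝ, 0 < m ∧
    ∀ K : Set (characterSpace ℂ A), IsCompact K → φ ∉ K →
      ∃ a ∈ Jset A φ, (∀ χ ∈ K, χ a = 1) ∧ ‖a‖ ≤ m

/-- `A` is a strong Ditkin algebra: for each character `φ`, the maximal ideal
`I_φ = {a | â(φ) = 0}` has a bounded approximate identity contained in `J_φ`. -/
def IsStrongDitkinAlgebra (A : Type*) [NormedCommRing A] [NormedAlgebra ℂ A] : Prop :=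
  ∀ φ : characterSpace ℂ A, ∃ m : ℝ, 0 < m ∧ ∃ u : ℕ → A,
    (∀ n, u n ∈ Jset A φ ∧ ‖u n‖ ≤ m) ∧
    ∀ a : A, φ a = 0 →
      Filter.Tendsto (fun n => ‖a - a * u n‖) Filter.atTop (nhds 0)

/-- `A` is semisimple: the Gelfand transform is injective, i.e. an element annihilated by all
characters is zero. -/
def IsSemisimple (A : Type*) [NormedCommRing A] [NormedAlgebra ℂ A] : Prop :=
  ∀ a : A, (∀ φ : characterSpace ℂ A, φ a = 0) → a = 0

/-- An admissible quadruple `(X, E, B, B̃)`: `X` is a compact Hausdorff space, `E` a commutative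
unital Banach algebra, `B` a natural `ℂ`-valued function algebra on `X` (realised by an injective
unital algebra embedding `incB : B →ₐ[ℂ] C(X, ℂ)` with continuous point evaluations, separating
points, and every character of `B` given by evaluation at a point of `X`), `B̃` an `E`-valued
function algebra on `X` (realised via `incT : B̃ →ₐ[ℂ] C(X, E)`; note that the constant
function `1_E` is automatically in the image, being the image of `1`), such that
`B·E ⊆ B̃` and `{λ ∘ f : f ∈ B̃, λ ∈ M(E)} ⊆ B`. -/
structure AdmissibleQuadruple
    (X : Type*) [TopologicalSpace X] [CompactSpace X] [T2Space X]
    (E : Type*) [NormedCommRing E] [NormedAlgebra ℂ E] [CompleteSpace E]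
    (B : Type*) [NormedCommRing B] [NormedAlgebra ℂ B] [CompleteSpace B]
    (Bt : Type*) [NormedCommRing Bt] [NormedAlgebra ℂ Bt] [CompleteSpace Bt] where
  incB : B →ₐ[ℂ] C(X, ℂ)
  incB_injective : Function.Injective incB
  incB_eval_continuous : ∀ x : X, Continuous fun g : B => incB g x
  incB_separates : ∀ x y : X, x ≠ y → ∃ g : B, incB g x ≠ incB g y
  natB : ∀ χ : characterSpace ℂ B, ∃ x : X, ∀ g : B, χ g = incB g x
  incT : Bt →ₐ[ℂ] C(X, E)
  incT_injective : Function.Injective incT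
  incT_eval_continuous : ∀ x : X, Continuous fun f : Bt => incT f x
  incT_separates : ∀ x y : X, x ≠ y → ∃ f : Bt, incT f x ≠ incT f y
  smul_mem : ∀ (g : B) (a : E), ∃ f : Bt, ∀ x : X, incT f x = incB g x • a
  comp_mem : ∀ (ψ : characterSpace ℂ E) (f : Bt), ∃ g : B, ∀ x : X, incB g x = ψ (incT f x)

variable {X : Type*} [TopologicalSpace X] [CompactSpace X] [T2Space X]
  {E : Type*} [NormedCommRing E] [NormedAlgebra ℂ E] [CompleteSpace E]
  {B : Type*} [NormedCommRing B] [NormedAlgebra ℂ B] [CompleteSpace B]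
  {Bt : Type*} [NormedCommRing Bt] [NormedAlgebra ℂ Bt] [CompleteSpace Bt]

/-- An admissible quadruple is natural if the associated map
`β : X × M(E) → M(B̃)`, `(x, ψ) ↦ ψ ∘ e_x`, is bijective; equivalently, every character of `B̃`
has a unique representation `f ↦ ψ ((incT f) x)`. -/
def AdmissibleQuadruple.IsNatural (Q : AdmissibleQuadruple X E B Bt) : Prop :=
  ∀ φ : characterSpace ℂ Bt, ∃! p : X × characterSpace ℂ E,
    ∀ f : Bt, φ f = p.2 (Q.incT f p.1)

/-- An admissible quadruple is tight if for each `f ∈ B̃` the `B`-valued map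
`λ ↦ λ ∘ f` on `M(E)` is continuous (from the weak-star topology to the norm of `B`). -/
def AdmissibleQuadruple.IsTight (Q : AdmissibleQuadruple X E B Bt) : Prop :=
  ∀ f : Bt, ∃ h : C(characterSpace ℂ E, B),
    ∀ (ψ : characterSpace ℂ E) (x : X), Q.incB (h ψ) x = ψ (Q.incT f x)

/-!
Every character `χ` of `C(X, E)` has the form `f ↦ ψ (f x)`: restricting `χ` to the scalar functions
gives, by Gelfand duality for `C(X, ℂ)`, evaluation at a point `x`, and restricting it to the
constants gives a character `ψ` of `E`; both depend continuously on `χ`. If `f x = 0`, then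
`f` is a uniform limit of `f - g f` with `g` a scalar bump, `g x = 1`, supported where `f` is small,
and `χ (f - g f) = 0`.

Given `a` with `ψ (a x) = 0`, Ditkin's condition in `E` gives `v ∈ J_ψ` with `a x * v ≈ a x`.
If `g` is a scalar bump equal to `1` near `x` and supported where `a * (1 - v)` is small, then
`u = 1 - g * (1 - v)` lies in `J_χ`, since near `χ` both `g = 1` at the point and `v` is
annihilated by the character, and `a - a * u = g * a * (1 - v)` is small.
-/

open WeakDual.CharacterSpace Filter Topology

namespace WeakDual.CharacterSpace

variable {𝕜 A B : Type*} [Field 𝕜] [TopologicalSpace 𝕜] [IsTopologicalRing 𝕜]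
  [TopologicalSpace A] [Semiring A] [Algebra 𝕜 A] [TopologicalSpace B] [Semiring B] [Algebra 𝕜 B]

def comap (ψ : A →ₐ[𝕜] B) (hψ : Continuous ψ) :
    C(characterSpace 𝕜 B, characterSpace 𝕜 A) where
  toFun φ := ⟨(toCLM φ).comp { toLinearMap := ψ.toLinearMap, cont := hψ }, by
    rw [eq_set_map_one_map_mul]
    exact ⟨(congrArg φ (map_one ψ)).trans (map_one φ), fun x y =>
      (congrArg φ (map_mul ψ x y)).trans (map_mul φ _ _)⟩⟩
  continuous_toFun := by
    refine Continuous.subtype_mk (continuous_of_continuous_eval fun a => ?_) _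
    exact (eval_continuous (ψ a)).comp continuous_subtype_val

end WeakDual.CharacterSpace

theorem exists_eventually_eq_one_norm_le_one_of_isOpen {𝕜 X : Type*} [RCLike 𝕜]
    [TopologicalSpace X] [NormalSpace X] [RegularSpace X] {U : Set X} {x₀ : X} (hU : IsOpen U)
    (hx₀ : x₀ ∈ U) :
    ∃ g : C(X, 𝕜), (∀ᶠ x in 𝓝 x₀, g x = 1) ∧ (∀ x, g x ≠ 0 → x ∈ U) ∧ ∀ x, ‖g x‖ ≤ 1 := by
  obtain ⟨t, ht, htc, htU⟩ := exists_mem_nhds_isClosed_subset (hU.mem_nhds hx₀)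
  obtain ⟨g, hg0, hg1, hg01⟩ := exists_continuous_zero_one_of_isClosed hU.isClosed_compl htc
    (Set.disjoint_compl_left_iff_subset.mpr htU)
  refine ⟨(⟨RCLike.ofReal, RCLike.continuous_ofReal⟩ : C(ℝ, 𝕜)).comp g, ?_, ?_, ?_⟩
  · filter_upwards [ht] with x hx
    simp [hg1 hx]
  · intro x hx
    by_contra hxU
    simp [hg0 hxU] at hx
  · intro x
    simpa [abs_of_nonneg (hg01 x).1] using (hg01 x).2

namespace ContinuousMap

section ScalarFunctions

variable (𝕜 X E : Type*) [RCLike 𝕜] [TopologicalSpace X] [NormedCommRing E] [NormedAlgebra 𝕜 E]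

noncomputable def scalarIncl : C(X, 𝕜) →ₐ[𝕜] C(X, E) :=
  AlgHom.compLeftContinuous 𝕜 (Algebra.ofId 𝕜 E) (continuous_algebraMap 𝕜 E)

variable {𝕜 X E}

@[simp]
theorem scalarIncl_apply (g : C(X, 𝕜)) (x : X) : scalarIncl 𝕜 X E g x = algebraMap 𝕜 E (g x) :=
  rfl

theorem continuous_scalarIncl : Continuous (scalarIncl 𝕜 X E) :=
  continuous_postcomp _

variable [CompactSpace X]

theorem norm_scalarIncl_mul_lt {g : C(X, 𝕜)} {F : C(X, E)} {ε : ℝ} (hε : 0 < ε)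
    (hg : ∀ x, ‖g x‖ ≤ 1) (hF : ∀ x, g x ≠ 0 → ‖F x‖ < ε) : ‖scalarIncl 𝕜 X E g * F‖ < ε := by
  refine (norm_lt_iff _ hε).mpr fun x => ?_
  rw [mul_apply, scalarIncl_apply, ← Algebra.smul_def, norm_smul]
  by_cases hgx : g x = 0
  · simpa [hgx] using hε
  · exact (mul_le_of_le_one_left (norm_nonneg _) (hg x)).trans_lt (hF x hgx)

variable [T2Space X]

theorem exists_eventually_eq_one_norm_scalarIncl_mul_lt {F : C(X, E)} {x₀ : X} {ε : ℝ}
    (hε : 0 < ε) (hF : ‖F x₀‖ < ε) :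
    ∃ g : C(X, 𝕜), (∀ᶠ x in 𝓝 x₀, g x = 1) ∧ ‖scalarIncl 𝕜 X E g * F‖ < ε := by
  obtain ⟨g, hg1, hgU, hg⟩ := exists_eventually_eq_one_norm_le_one_of_isOpen (𝕜 := 𝕜)
    (isOpen_lt (continuous_norm.comp F.continuous) continuous_const) hF
  exact ⟨g, hg1, norm_scalarIncl_mul_lt hε hg hgU⟩

end ScalarFunctions

section Characters

variable {𝕜 X E : Type*} [RCLike 𝕜] [TopologicalSpace X] [NormedCommRing E] [NormedAlgebra 𝕜 E]

noncomputable def charValue : C(characterSpace 𝕜 C(X, E), characterSpace 𝕜 E) :=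
  comap (IsScalarTower.toAlgHom 𝕜 E C(X, E)) (continuous_algebraMap E C(X, E))

theorem charValue_apply (χ : characterSpace 𝕜 C(X, E)) (e : E) :
    charValue χ e = χ (algebraMap E C(X, E) e) :=
  rfl

variable [CompactSpace X] [T2Space X]

noncomputable def charPoint : C(characterSpace 𝕜 C(X, E), X) :=
  ((homeoEval X 𝕜).symm : C(_, X)).comp (comap (scalarIncl 𝕜 X E) continuous_scalarIncl)

theorem apply_scalarIncl (χ : characterSpace 𝕜 C(X, E)) (g : C(X, 𝕜)) :
    χ (scalarIncl 𝕜 X E g) = g (charPoint χ) := by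
  have h := (homeoEval X 𝕜).apply_symm_apply (comap _ continuous_scalarIncl χ)
  exact (congrArg (· g) h).symm

theorem apply_eq_zero_of_apply_charPoint_eq_zero (χ : characterSpace 𝕜 C(X, E)) {f : C(X, E)}
    (hf : f (charPoint χ) = 0) : χ f = 0 := by
  have hker : IsClosed {h : C(X, E) | χ h = 0} := isClosed_eq (map_continuous χ) continuous_const
  refine hker.closure_subset (Metric.mem_closure_iff.mpr fun ε hε => ?_)
  obtain ⟨g, hg1, hgf⟩ := exists_eventually_eq_one_norm_scalarIncl_mul_lt (𝕜 := 𝕜) (F := f)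
    (x₀ := charPoint χ) hε (by simpa [hf])
  refine ⟨f - scalarIncl 𝕜 X E g * f, ?_, by simpa [dist_eq_norm] using hgf⟩
  simp [map_mul, apply_scalarIncl, hg1.self_of_nhds]

theorem character_apply (χ : characterSpace 𝕜 C(X, E)) (f : C(X, E)) :
    χ f = charValue χ (f (charPoint χ)) := by
  rw [charValue_apply, ← sub_eq_zero, ← map_sub]
  exact apply_eq_zero_of_apply_charPoint_eq_zero χ (by simp)

end Characters

variable {X E : Type*} [TopologicalSpace X] [CompactSpace X] [T2Space X]
  [NormedCommRing E] [NormedAlgebra ℂ E]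

theorem one_sub_scalarIncl_mul_mem_Jset {φ : characterSpace ℂ C(X, E)} {g : C(X, ℂ)}
    (hg : ∀ᶠ x in 𝓝 (charPoint φ), g x = 1) {v : E} (hv : v ∈ Jset E (charValue φ)) :
    1 - scalarIncl ℂ X E g * algebraMap E C(X, E) (1 - v) ∈ Jset C(X, E) φ := by
  filter_upwards [(charPoint.continuous.tendsto φ).eventually hg,
    (charValue.continuous.tendsto φ).eventually hv] with χ hgχ hvχ
  rw [map_sub, map_one, map_mul, apply_scalarIncl, ← charValue_apply, hgχ, map_sub, map_one, hvχ]
  ring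

end ContinuousMap

open ContinuousMap in
theorem isDitkinAlgebra_continuousMap_of_isDitkinAlgebra_general
    (X : Type*) [TopologicalSpace X] [CompactSpace X] [T2Space X]
    (E : Type*) [NormedCommRing E] [NormedAlgebra ℂ E]
    (hE : IsDitkinAlgebra E) :
    IsDitkinAlgebra C(X, E) := by
  intro φ a ha
  rw [character_apply] at ha
  refine Metric.mem_closure_iff.mpr fun ε hε => ?_
  obtain ⟨_, ⟨v, hv, rfl⟩, hav⟩ := Metric.mem_closure_iff.mp (hE _ _ ha) ε hε
  obtain ⟨g, hg, hga⟩ := exists_eventually_eq_one_norm_scalarIncl_mul_lt (𝕜 := ℂ)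
    (F := a * algebraMap E C(X, E) (1 - v)) hε (by simpa [mul_sub, dist_eq_norm] using hav)
  refine ⟨a * _, ⟨_, one_sub_scalarIncl_mul_mem_Jset hg hv, rfl⟩, ?_⟩
  rwa [dist_eq_norm, mul_sub, mul_one, sub_sub_cancel, mul_left_comm]

/-- For a nonempty compact Hausdorff space `X` and a commutative unital Banach
algebra `E`, if `E` is a Ditkin algebra then so is `C(X, E)` (with the uniform norm). -/
theorem isDitkinAlgebra_continuousMap_of_isDitkinAlgebra
    (X : Type*) [TopologicalSpace X] [CompactSpace X] [T2Space X] [Nonempty X]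
    (E : Type*) [NormedCommRing E] [NormedAlgebra ℂ E] [CompleteSpace E]
    (hE : IsDitkinAlgebra E) :
    IsDitkinAlgebra C(X, E) :=
  isDitkinAlgebra_continuousMap_of_isDitkinAlgebra_general X E hE
end

section
/- Let X be a nonempty compact Hausdorff space and E a commutative Banach algebra with unit. Then C(X,E) has bounded relative units if and only if E has bounded relative units. -/
open WeakDual

variable {X : Type*} [TopologicalSpace X] [CompactSpace X] [T2Space X]
  {E : Type*} [NormedCommRing E] [NormedAlgebra ℂ E] [CompleteSpace E]
  {B : Type*} [NormedCommRing B] [NormedAlgebra ℂ B] [CompleteSpace B]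
  {Bt : Type*} [NormedCommRing Bt] [NormedAlgebra ℂ Bt] [CompleteSpace Bt]

/-!
Characters of `C(X, E)` are the maps `f ↦ ψ (f x)`, and `(x, ψ) ↦ (f ↦ ψ (f x))` is a
homeomorphism `X × M(E) ≃ M(C(X, E))`. Evaluation at a point is a contractive surjection
`C(X, E) → E` whose dual map `M(E) → M(C(X, E))` is a continuous injection, so relative units of
`C(X, E)` evaluate to relative units of `E`. Conversely, if a compact `K ⊆ X × M(E)` avoids
`(x₀, ψ₀)`, so does a box `U × V` around it; taking a relative unit `e` of `E` equal to `1` off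
`V` and an Urysohn function `g` vanishing near `x₀` and equal to `1` off `U`, the function
`(1 - g) • e + g • 1` is a relative unit for `K` of norm at most `max ‖e‖ ‖1‖`.
-/

open Set Filter Topology

namespace WeakDual.CharacterSpace

section compAlgHom

variable {𝕜 A B : Type*} [NontriviallyNormedField 𝕜] [NormedRing A] [NormedAlgebra 𝕜 A]
  [CompleteSpace A] [NormedRing B] [NormedAlgebra 𝕜 B]

noncomputable def compAlgHom (π : A →ₐ[𝕜] B) : C(characterSpace 𝕜 B, characterSpace 𝕜 A) where
  toFun ψ := equivAlgHom.symm ((toAlgHom ψ).comp π)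
  continuous_toFun := continuous_induced_rng.2 <|
    continuous_of_continuous_eval fun a => (eval_continuous (π a)).comp continuous_subtype_val

@[simp]
theorem compAlgHom_apply (π : A →ₐ[𝕜] B) (ψ : characterSpace 𝕜 B) (a : A) :
    compAlgHom π ψ a = ψ (π a) :=
  rfl

theorem compAlgHom_injective {π : A →ₐ[𝕜] B} (hπ : Function.Surjective π) :
    Function.Injective (compAlgHom π) := fun ψ ψ' h => by
  ext b
  obtain ⟨a, rfl⟩ := hπ b
  exact DFunLike.congr_fun h a

end compAlgHom

theorem continuous_eval_prod {𝕜 A : Type*} [NontriviallyNormedField 𝕜] [NormedRing A]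
    [NormedAlgebra 𝕜 A] [CompleteSpace A] :
    Continuous fun p : characterSpace 𝕜 A × A => p.1 p.2 :=
  continuous_prod_of_continuous_lipschitzWith' _ ‖(1 : A)‖₊
    (fun φ => (toStrongDual (φ : WeakDual 𝕜 A)).lipschitz.weaken (norm_le_norm_one φ))
    (fun a => (eval_continuous a).comp continuous_subtype_val)

end WeakDual.CharacterSpace

open WeakDual.CharacterSpace

theorem HasBoundedRelativeUnits.of_surjective {A B : Type*} [NormedCommRing A]
    [NormedAlgebra ℂ A] [CompleteSpace A] [NormedCommRing B] [NormedAlgebra ℂ B]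
    (h : HasBoundedRelativeUnits A) (π : A →ₐ[ℂ] B) (hπ : Function.Surjective π)
    (hπ_norm : ∀ a, ‖π a‖ ≤ ‖a‖) : HasBoundedRelativeUnits B := by
  intro ψ₀
  obtain ⟨m, hm, hunit⟩ := h (compAlgHom π ψ₀)
  refine ⟨m, hm, fun K hK hψ₀K => ?_⟩
  obtain ⟨a, haJ, haK, ham⟩ := hunit _ (hK.image (compAlgHom π).continuous)
    fun ⟨ψ, hψ, hψψ₀⟩ => hψ₀K (compAlgHom_injective hπ hψψ₀ ▸ hψ)
  exact ⟨π a, (compAlgHom π).continuous.continuousAt.eventually haJ,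
    fun ψ hψ => haK _ (mem_image_of_mem _ hψ), (hπ_norm a).trans ham⟩

theorem exists_continuousMap_eventually_zero_eqOn_one {X : Type*} [TopologicalSpace X]
    [T4Space X] {U : Set X} (hU : IsOpen U) {x : X} (hx : x ∈ U) :
    ∃ g : C(X, ℝ), (∀ᶠ y in 𝓝 x, g y = 0) ∧ EqOn g 1 Uᶜ ∧ ∀ y, g y ∈ Icc (0 : ℝ) 1 := by
  obtain ⟨t, ht, htc, htU⟩ := exists_mem_nhds_isClosed_subset (hU.mem_nhds hx)
  obtain ⟨g, hg0, hg1, hg01⟩ := exists_continuous_zero_one_of_isClosed htc hU.isClosed_compl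
    (disjoint_compl_right_iff_subset.2 htU)
  exact ⟨g, eventually_of_mem ht hg0, hg1, hg01⟩

theorem norm_convexCombination_le {F : Type*} [SeminormedAddCommGroup F] [NormedSpace ℝ F]
    {t : ℝ} (ht : t ∈ Icc (0 : ℝ) 1) (a b : F) : ‖(1 - t) • a + t • b‖ ≤ max ‖a‖ ‖b‖ :=
  mem_closedBall_zero_iff.1 <| convex_closedBall (0 : F) _
    (mem_closedBall_zero_iff.2 (le_max_left _ _)) (mem_closedBall_zero_iff.2 (le_max_right _ _))
    (sub_nonneg.2 ht.2) ht.1 (sub_add_cancel 1 t)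

namespace ContinuousMap

section scalarAlgHom

variable {X : Type*} [TopologicalSpace X] {E : Type*} [NormedRing E] [NormedAlgebra ℂ E]

noncomputable def scalarAlgHom : C(X, ℂ) →ₐ[ℂ] C(X, E) :=
  (Algebra.ofId ℂ E).compLeftContinuous ℂ (continuous_algebraMap ℂ E)

@[simp]
theorem scalarAlgHom_apply (g : C(X, ℂ)) (y : X) :
    scalarAlgHom (E := E) g y = algebraMap ℂ E (g y) :=
  rfl

end scalarAlgHom

variable {X : Type*} [TopologicalSpace X] [CompactSpace X]
  {E : Type*} [NormedCommRing E] [NormedAlgebra ℂ E] [CompleteSpace E]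

noncomputable def evalCharacter (p : X × characterSpace ℂ E) : characterSpace ℂ C(X, E) :=
  compAlgHom (evalAlgHom ℂ E p.1) p.2

theorem continuous_evalCharacter : Continuous (evalCharacter (X := X) (E := E)) :=
  continuous_induced_rng.2 <| continuous_of_continuous_eval fun f =>
    continuous_eval_prod.comp (continuous_snd.prodMk (f.continuous.comp continuous_fst))

theorem evalCharacter_injective [T2Space X] :
    Function.Injective (evalCharacter (X := X) (E := E)) := by
  rintro ⟨x, ψ⟩ ⟨y, ψ'⟩ h
  have happ (f : C(X, E)) : ψ (f x) = ψ' (f y) := DFunLike.congr_fun h f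
  obtain rfl : x = y := (continuousMapEval_bijective X ℂ).injective <| CharacterSpace.ext
    fun g => by simpa [AlgHomClass.commutes] using happ (scalarAlgHom g)
  obtain rfl : ψ = ψ' := CharacterSpace.ext fun a => happ (const X a)
  rfl

theorem character_apply_eq_zero_of_apply_eq_zero (φ : characterSpace ℂ C(X, E)) {x : X}
    (hx : compAlgHom scalarAlgHom φ = continuousMapEval X ℂ x) {f : C(X, E)} (hf : f x = 0) :
    φ f = 0 := by
  -- `u = ε / (‖f‖ + ε)` is `1` at `x`, so `φ f = φ (u f)`, while `‖u f‖ ≤ ε`.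
  have hbound (ε : ℝ) (hε : 0 < ε) : ‖φ f‖ ≤ ‖(1 : C(X, E))‖ * ε := by
    let u : C(X, ℂ) :=
      ⟨fun y => ((ε / (‖f y‖ + ε) : ℝ) : ℂ), by fun_prop (disch := intros; positivity)⟩
    have hux : φ (scalarAlgHom u) = 1 := by
      simpa [u, hf, hε.ne'] using DFunLike.congr_fun hx u
    have hnorm : ‖scalarAlgHom u * f‖ ≤ ε := by
      refine (norm_le _ hε.le).2 fun y => ?_
      simp only [mul_apply, scalarAlgHom_apply, ← Algebra.smul_def, norm_smul, u, coe_mk,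
        Complex.norm_real, Real.norm_eq_abs]
      rw [abs_of_pos (by positivity), div_mul_eq_mul_div, div_le_iff₀ (by positivity)]
      nlinarith [norm_nonneg (f y)]
    calc ‖φ f‖ = ‖φ (scalarAlgHom u * f)‖ := by rw [map_mul, hux, one_mul]
      _ ≤ ‖(1 : C(X, E))‖ * ‖scalarAlgHom u * f‖ :=
        ((toStrongDual (φ : WeakDual ℂ C(X, E))).le_opNorm _).trans
          (by gcongr; exact norm_le_norm_one φ)
      _ ≤ ‖(1 : C(X, E))‖ * ε := by gcongr
  have hlim : Tendsto (fun ε : ℝ => ‖(1 : C(X, E))‖ * ε) (𝓝[>] 0) (𝓝 0) := by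
    simpa using ((continuous_const_mul ‖(1 : C(X, E))‖).tendsto 0).mono_left nhdsWithin_le_nhds
  exact norm_le_zero_iff.1 (ge_of_tendsto hlim (eventually_nhdsWithin_of_forall hbound))

theorem evalCharacter_surjective [T2Space X] :
    Function.Surjective (evalCharacter (X := X) (E := E)) := by
  intro φ
  obtain ⟨x, hx⟩ := (continuousMapEval_bijective X ℂ).surjective (compAlgHom scalarAlgHom φ)
  refine ⟨(x, compAlgHom ((Algebra.ofId E C(X, E)).restrictScalars ℂ) φ),
    CharacterSpace.ext fun f => ?_⟩
  have hf := character_apply_eq_zero_of_apply_eq_zero φ hx.symm (f := f - const X (f x))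
    (by simp)
  rw [map_sub, sub_eq_zero] at hf
  exact hf.symm

noncomputable def evalCharacterHomeomorph [T2Space X] :
    X × characterSpace ℂ E ≃ₜ characterSpace ℂ C(X, E) :=
  continuous_evalCharacter.homeoOfEquivCompactToT2
    (f := Equiv.ofBijective _ ⟨evalCharacter_injective, evalCharacter_surjective⟩)

@[simp]
theorem evalCharacterHomeomorph_apply [T2Space X] (p : X × characterSpace ℂ E) (f : C(X, E)) :
    evalCharacterHomeomorph p f = p.2 (f p.1) :=
  rfl

end ContinuousMap

open ContinuousMap in
theorem HasBoundedRelativeUnits.continuousMap {X : Type*} [TopologicalSpace X] [CompactSpace X]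
    [T2Space X] {E : Type*} [NormedCommRing E] [NormedAlgebra ℂ E] [CompleteSpace E]
    (h : HasBoundedRelativeUnits E) : HasBoundedRelativeUnits C(X, E) := by
  intro φ₀
  obtain ⟨⟨x₀, ψ₀⟩, rfl⟩ := evalCharacterHomeomorph.surjective φ₀
  obtain ⟨m, hm, hunit⟩ := h ψ₀
  refine ⟨max m ‖(1 : E)‖, hm.trans_le (le_max_left _ _), fun K hK hK₀ => ?_⟩
  obtain ⟨U, V, hU, hx₀, hV, hψ₀, hUV⟩ := mem_nhds_prod_iff'.1 <|
    (hK.isClosed.preimage evalCharacterHomeomorph.continuous).isOpen_compl.mem_nhds hK₀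
  obtain ⟨e, he₀, heV, hem⟩ := hunit Vᶜ hV.isClosed_compl.isCompact (not_not_intro hψ₀)
  obtain ⟨g, hg₀, hgU, hg01⟩ := exists_continuousMap_eventually_zero_eqOn_one hU hx₀
  let a : C(X, E) := ⟨fun y => (1 - g y) • e + g y • (1 : E), by fun_prop⟩
  have ha (y : X) (ψ : characterSpace ℂ E) : ψ (a y) = (1 - g y) * ψ e + g y := by
    simp [a, ← Complex.coe_smul]
  refine ⟨a, ?_, ?_, ?_⟩
  · change ∀ᶠ χ in 𝓝 (evalCharacterHomeomorph (x₀, ψ₀)), χ a = 0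
    rw [← evalCharacterHomeomorph.map_nhds_eq, eventually_map, nhds_prod_eq]
    filter_upwards [hg₀.prod_mk he₀] with ⟨y, ψ⟩ ⟨hy, hψ⟩
    simp [ha, hy, hψ]
  · intro χ hχ
    obtain ⟨⟨y, ψ⟩, rfl⟩ := evalCharacterHomeomorph.surjective χ
    rw [evalCharacterHomeomorph_apply, ha]
    by_cases hy : y ∈ U
    · have hψ : ψ ∉ V := fun hψ => hUV ⟨hy, hψ⟩ hχ
      simp [heV ψ hψ]
    · simp [hgU hy]
  · exact (norm_le _ (hm.le.trans (le_max_left _ _))).2 fun y =>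
      (norm_convexCombination_le (hg01 y) e 1).trans (max_le_max_right _ hem)

/-- For a nonempty compact Hausdorff space `X` and a commutative unital Banach
algebra `E`, `C(X, E)` has bounded relative units iff `E` has bounded relative units. -/
theorem hasBoundedRelativeUnits_continuousMap_iff
    (X : Type*) [TopologicalSpace X] [CompactSpace X] [T2Space X] [Nonempty X]
    (E : Type*) [NormedCommRing E] [NormedAlgebra ℂ E] [CompleteSpace E] :
    HasBoundedRelativeUnits C(X, E) ↔ HasBoundedRelativeUnits E := by
  obtain ⟨x₀⟩ := ‹Nonempty X›
  exact ⟨fun h => h.of_surjective (ContinuousMap.evalAlgHom ℂ E x₀)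
      (fun e => ⟨ContinuousMap.const X e, rfl⟩) (ContinuousMap.norm_coe_le_norm · x₀),
    HasBoundedRelativeUnits.continuousMap⟩
end
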